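/- (Uniqueness of envelope extension, weak version.) Let ω be a nonempty factor of the doubling sequence D∞ and suppose Env(ω) = E_{m,i} for some m ≥ 1 and i ∈ {1,2}. Then ω occurs at exactly one position in E_{m,i}; in particular there exist unique words μ₁(ω) and μ₂(ω) with E_{m,i} = μ₁(ω)·ω·μ₂(ω). -/

import Mathlib

namespace PD

/-- The period-doubling substitution on the alphabet `Bool`,
where `false` stands for the letter `a` and `true` for the letter `b`:
`σ(a) = ab`, `σ(b) = aa`. -/
def sub : Bool → List Bool
  | false => [false, true]
  | true  => [false, false]

/-- The substitution applied to a finite word. -/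
def subW (w : List Bool) : List Bool := w.flatMap sub

/-- `A m = σ^m(a)`. -/
def A (m : ℕ) : List Bool := subW^[m] [false]

/-- `B m = σ^m(b)`. -/
def B (m : ℕ) : List Bool := subW^[m] [true]

/-- The doubling sequence `D∞` (0-indexed: `D n` is the `(n+1)`-th letter),
the fixed point of `σ` beginning with `a`; `A m` is a prefix of `A (m+1)`,
and `A (n+1)` has length `2^(n+1) > n`. -/
def D (n : ℕ) : Bool := (A (n + 1)).getD n false

/-- `δ m`, the last letter of `A m`. -/
def delta (m : ℕ) : Bool := (A m).getLastD false

/-- The envelope words (`i ∈ {1,2}`): `E m 1 = A m` minus its last letter,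
`E m 2 = A (m-1) ++ (A m` minus its last letter `)`. -/
def E (m i : ℕ) : List Bool :=
  if i = 1 then (A m).dropLast else A (m - 1) ++ (A m).dropLast

/-- `w` occurs at the (1-indexed) position `j` in the finite word `τ`. -/
def OccursIn (w τ : List Bool) (j : ℕ) : Prop :=
  1 ≤ j ∧ (τ.drop (j - 1)).take w.length = w

/-- `w` occurs at the (1-indexed) position `j` in the doubling sequence. -/
def OccursD (w : List Bool) (j : ℕ) : Prop :=
  1 ≤ j ∧ ∀ k < w.length, D (j - 1 + k) = w.getD k false

/-- `w` is a factor of the doubling sequence. -/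
def FactorD (w : List Bool) : Prop := ∃ j, OccursD w j

/-- `L w p`: the (1-indexed) starting position of the `p`-th occurrence of `w`
in the doubling sequence, occurrences being ordered by starting position.
(Each factor occurs infinitely often, so `Nat.nth` enumerates all occurrences
in increasing order.) -/
noncomputable def L (w : List Bool) (p : ℕ) : ℕ := Nat.nth (OccursD w) (p - 1)

/-- The strict total order on envelope words:
`E m₁ i₁ ⊏ E m₂ i₂` iff `m₁ < m₂`, or `m₁ = m₂` and `i₁ < i₂`. -/
def EnvLt (m₁ i₁ m₂ i₂ : ℕ) : Prop := m₁ < m₂ ∨ (m₁ = m₂ ∧ i₁ < i₂)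

/-- `Env(w) = E m i`: the envelope word `E m i` is the `⊏`-minimal envelope
word containing `w` as a factor. -/
def IsEnv (w : List Bool) (m i : ℕ) : Prop :=
  1 ≤ m ∧ (i = 1 ∨ i = 2) ∧ w <:+: E m i ∧
    ∀ m' i', 1 ≤ m' → (i' = 1 ∨ i' = 2) → EnvLt m' i' m i → ¬ w <:+: E m' i'

/-- The substitution `φ₁(a) = a`, `φ₁(b) = bb`. -/
def phi1 : Bool → List Bool
  | false => [false]
  | true  => [true, true]

/-- `Θ₁ = φ₁(D∞)` (0-indexed): `φ₁(A (n+1))` is a prefix of `Θ₁` of length `> n`. -/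
def Theta1 (n : ℕ) : Bool := ((A (n + 1)).flatMap phi1).getD n false

/-- The substitution `φ₂(a) = ab`, `φ₂(b) = acac`, over the alphabet `Fin 3`
where `0` stands for `a`, `1` for `b` and `2` for `c`. -/
def phi2 : Bool → List (Fin 3)
  | false => [0, 1]
  | true  => [0, 2, 0, 2]

/-- `Θ₂ = φ₂(D∞)` (0-indexed). -/
def Theta2 (n : ℕ) : Fin 3 := ((A (n + 1)).flatMap phi2).getD n 0

/-- `N₁(x,p)`: the number of letters `x` among the first `p` letters of `Θ₁`. -/
def N1 (x : Bool) (p : ℕ) : ℕ := ((List.range p).map Theta1).count x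

/-- `N₂(x,p)`: the number of letters `x` among the first `p` letters of `Θ₂`. -/
def N2 (x : Fin 3) (p : ℕ) : ℕ := ((List.range p).map Theta2).count x

end PD

open PD

/-!
For `m ≥ 1` we have `E (m + 1) i = σ(E m i)·a`, and every even position of a word `σ(u)·a`
carries the letter `a`. So a factor `w` containing `b` occurs only at positions of one parity,
and completing `w` by the letters `a` forced at its two ends turns it into a `σ`-image `σ(v)`
whose occurrences in `σ(u)·a` correspond exactly to the occurrences of `v` in `u`. Then
`Env(v) = E (m - 1) i` and induction on `m` applies. A factor without `b` is `a`, `aa` or `aaa`,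
since `bb`, and hence `aaaa`, never occurs; their envelopes `E 1 1`, `E 1 2`, `E 3 1` contain
them exactly once.
-/

namespace PD

section Occurrence

variable {α : Type*} {w τ : List α} {s : ℕ}

theorem infix_iff_exists_prefix_drop : w <:+: τ ↔ ∃ s, w <+: τ.drop s := by
  constructor
  · rintro ⟨p, q, rfl⟩
    exact ⟨p.length, by simp [List.append_assoc]⟩
  · rintro ⟨s, h⟩
    exact h.isInfix.trans (List.drop_suffix s τ).isInfix

theorem lt_length_of_prefix_drop (hw : w ≠ []) (h : w <+: τ.drop s) : s < τ.length := by
  by_contra! hs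
  rw [List.drop_eq_nil_of_le hs, List.prefix_nil] at h
  exact hw h

theorem existsUnique_prefix_drop_of_forall_lt (hw : w ≠ []) (hs : w <+: τ.drop s)
    (h : ∀ s' < τ.length, w <+: τ.drop s' → s' = s) : ∃! s, w <+: τ.drop s :=
  ⟨s, hs, fun s' hs' => h s' (lt_length_of_prefix_drop hw hs') hs'⟩

theorem eq_take_append_append_drop (h : w <+: τ.drop s) :
    τ = τ.take s ++ w ++ τ.drop (s + w.length) := by
  obtain ⟨q, hq⟩ := h
  have hq' : q = τ.drop (s + w.length) := by rw [← List.drop_drop, ← hq, List.drop_left]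
  rw [← hq', List.append_assoc, hq, List.take_append_drop]

theorem existsUnique_append_append_eq (h : ∃! s, w <+: τ.drop s) :
    ∃! μ : List α × List α, τ = μ.1 ++ w ++ μ.2 := by
  obtain ⟨s, hs, huniq⟩ := h
  refine ⟨(τ.take s, τ.drop (s + w.length)), eq_take_append_append_drop hs, ?_⟩
  rintro ⟨p, q⟩ (rfl : τ = p ++ w ++ q)
  obtain rfl : p.length = s := huniq _ (by simp [List.append_assoc])
  simp [List.append_assoc]

end Occurrence

theorem occursIn_iff {w τ : List Bool} {j : ℕ} :
    OccursIn w τ j ↔ 1 ≤ j ∧ w <+: τ.drop (j - 1) := by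
  rw [OccursIn, List.prefix_iff_eq_take, eq_comm]

theorem existsUnique_occursIn_iff {w τ : List Bool} :
    (∃! j, OccursIn w τ j) ↔ ∃! s, w <+: τ.drop s := by
  simp only [occursIn_iff]
  constructor
  · rintro ⟨j, ⟨hj, hocc⟩, huniq⟩
    refine ⟨j - 1, hocc, fun s hs => ?_⟩
    have := huniq (s + 1) ⟨by omega, by simpa using hs⟩
    omega
  · rintro ⟨s, hs, huniq⟩
    refine ⟨s + 1, ⟨by omega, by simpa using hs⟩, fun j ⟨hj, hocc⟩ => ?_⟩
    have := huniq _ hocc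
    omega

section Substitution

variable {u v w : List Bool} {k q : ℕ}

theorem subW_cons (x : Bool) (u : List Bool) : subW (x :: u) = sub x ++ subW u := rfl

theorem subW_append (u v : List Bool) : subW (u ++ v) = subW u ++ subW v :=
  List.flatMap_append

theorem length_subW (u : List Bool) : (subW u).length = 2 * u.length := by
  induction u with
  | nil => rfl
  | cons x u ih => cases x <;> simp [subW_cons, sub, ih] <;> ring

theorem subW_eq_nil_iff : subW u = [] ↔ u = [] := by
  rw [← List.length_eq_zero_iff, length_subW, ← List.length_eq_zero_iff]
  omega

theorem take_two_mul_subW (u : List Bool) (k : ℕ) : (subW u).take (2 * k) = subW (u.take k) := by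
  induction u generalizing k with
  | nil => simp [subW]
  | cons x u ih =>
    cases k with
    | zero => simp [subW]
    | succ k => cases x <;> simp [subW_cons, sub, Nat.mul_succ, ih]

theorem subW_prefix_subW_iff : subW v <+: subW u ↔ v <+: u := by
  induction v generalizing u with
  | nil => simp [subW]
  | cons x v ih =>
    cases u with
    | nil => exact iff_of_false (by cases x <;> simp [sub, subW]) (by simp)
    | cons y u => cases x <;> cases y <;> simp [subW_cons, sub, ih]

def subWa (u : List Bool) : List Bool := subW u ++ [false]

theorem subWa_cons (x : Bool) (u : List Bool) : subWa (x :: u) = sub x ++ subWa u := by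
  simp [subWa, subW_cons]

theorem length_subWa (u : List Bool) : (subWa u).length = 2 * u.length + 1 := by
  simp [subWa, length_subW]

theorem getElem?_subWa_two_mul (hq : q ≤ u.length) :
    (subWa u)[2 * q]? = some false := by
  induction u generalizing q with
  | nil =>
    obtain rfl : q = 0 := by simpa using hq
    rfl
  | cons x u ih =>
    cases q with
    | zero => cases x <;> rfl
    | succ q => cases x <;> simpa [subWa_cons, sub, Nat.mul_succ] using ih (by simpa using hq)

theorem getElem?_subWa_two_mul_add_one (u : List Bool) (q : ℕ) :
    (subWa u)[2 * q + 1]? = u[q]?.map not := by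
  induction u generalizing q with
  | nil => simp [subWa, subW]
  | cons x u ih =>
    cases q with
    | zero => cases x <;> rfl
    | succ q => cases x <;> simpa [subWa_cons, sub, Nat.mul_succ] using ih q

theorem getElem?_subWa_two_mul_ne_some_true (u : List Bool) (q : ℕ) :
    (subWa u)[2 * q]? ≠ some true := by
  rcases le_or_gt q u.length with hq | hq
  · simp [getElem?_subWa_two_mul hq]
  · rw [List.getElem?_eq_none (by rw [length_subWa]; omega)]
    simp

theorem drop_two_mul_subWa (hk : k ≤ u.length) :
    (subWa u).drop (2 * k) = subWa (u.drop k) := by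
  induction u generalizing k with
  | nil =>
    obtain rfl : k = 0 := by simpa using hk
    rfl
  | cons x u ih =>
    cases k with
    | zero => rfl
    | succ k => cases x <;> simpa [subWa_cons, sub, Nat.mul_succ] using ih (by simpa using hk)

theorem subW_prefix_subWa_iff : subW v <+: subWa u ↔ v <+: u := by
  rw [subWa, List.prefix_concat_iff, subW_prefix_subW_iff, or_iff_right]
  intro h
  have := congrArg List.length h
  simp only [length_subW, List.length_append, List.length_singleton] at this
  omega

theorem subW_prefix_drop_subWa_iff :
    subW v <+: (subWa u).drop (2 * k) ↔ v <+: u.drop k := by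
  rcases le_or_gt k u.length with hk | hk
  · rw [drop_two_mul_subWa hk, subW_prefix_subWa_iff]
  · rw [List.drop_eq_nil_of_le (by rw [length_subWa]; omega), List.drop_eq_nil_of_le hk.le,
      List.prefix_nil, List.prefix_nil, subW_eq_nil_iff]

theorem exists_subW_eq_of_prefix_drop_subWa (he : w.length % 2 = 0)
    (h : w <+: (subWa u).drop (2 * k)) : ∃ v, w = subW v := by
  rcases le_or_gt k u.length with hk | hk
  · rw [drop_two_mul_subWa hk, subWa, List.prefix_concat_iff] at h
    rcases h with h | h
    · have := congrArg List.length h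
      simp only [length_subW, List.length_append, List.length_singleton] at this
      omega
    · refine ⟨(u.drop k).take (w.length / 2), ?_⟩
      rw [← take_two_mul_subW, Nat.mul_div_cancel' (Nat.dvd_of_mod_eq_zero he)]
      exact List.prefix_iff_eq_take.1 h
  · rw [List.drop_eq_nil_of_le (by rw [length_subWa]; omega), List.prefix_nil] at h
    exact ⟨[], h⟩

end Substitution

section Alignment

variable {u w : List Bool} {k s t : ℕ}

theorem eq_false_of_prefix_drop_subWa {x : Bool}
    (h : w <+: (subWa u).drop s) (ht : w[t]? = some x) (he : (s + t) % 2 = 0) : x = false := by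
  have hst : (subWa u)[s + t]? = some x := by
    have ht' : t < w.length := (List.getElem?_eq_some_iff.1 ht).1
    rw [← List.getElem?_drop, List.prefix_iff_getElem?.1 h t ht', ← ht,
      List.getElem?_eq_getElem]
  cases x
  · rfl
  · rw [show s + t = 2 * ((s + t) / 2) by omega] at hst
    exact absurd hst (getElem?_subWa_two_mul_ne_some_true u _)

theorem mod_two_eq_of_prefix_drop_subWa (ht : w[t]? = some true)
    (h : w <+: (subWa u).drop s) : s % 2 = (t + 1) % 2 := by
  by_contra hodd
  exact Bool.noConfusion (eq_false_of_prefix_drop_subWa h ht (by omega))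

theorem cons_false_prefix_drop_subWa_iff (hw : w ≠ []) :
    false :: w <+: (subWa u).drop (2 * k) ↔ w <+: (subWa u).drop (2 * k + 1) := by
  constructor
  · rintro ⟨r, hr⟩
    exact ⟨r, by rw [List.drop_add_one_eq_tail_drop, ← hr]; rfl⟩
  · intro h
    have hlt : 2 * k < (subWa u).length := by
      have := lt_length_of_prefix_drop hw h
      omega
    have hfalse := getElem?_subWa_two_mul (u := u) (q := k) (by rw [length_subWa] at hlt; omega)
    rw [List.getElem?_eq_getElem hlt, Option.some_inj] at hfalse
    rw [List.drop_eq_getElem_cons hlt, List.cons_prefix_cons]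
    exact ⟨hfalse.symm, h⟩

theorem append_false_prefix_drop_subWa_iff {p : ℕ} (hw : w ≠ [])
    (he : (p + w.length) % 2 = 0) :
    w ++ [false] <+: (subWa u).drop p ↔ w <+: (subWa u).drop p := by
  refine ⟨fun h => (List.prefix_append w [false]).trans h, fun h => ?_⟩
  have hlen := h.length_le
  have hpos := List.length_pos_iff.2 hw
  rw [List.length_drop, length_subWa] at hlen
  have hnext : ((subWa u).drop p)[w.length]? = some false := by
    rw [List.getElem?_drop, show p + w.length = 2 * ((p + w.length) / 2) by omega]
    exact getElem?_subWa_two_mul (by omega)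
  rw [List.prefix_iff_eq_take, List.length_append, List.length_singleton, List.take_add_one,
    hnext, ← List.prefix_iff_eq_take.1 h]
  rfl

theorem exists_even_length_prefix_drop_subWa_iff {u₀ : List Bool} {k₀ : ℕ} (hw : true ∈ w)
    (h₀ : w <+: (subWa u₀).drop (2 * k₀)) :
    ∃ w', true ∈ w' ∧ w'.length % 2 = 0 ∧
      ∀ u k, w <+: (subWa u).drop (2 * k) ↔ w' <+: (subWa u).drop (2 * k) := by
  rcases Nat.mod_two_eq_zero_or_one w.length with he | ho
  · exact ⟨w, hw, he, fun _ _ => Iff.rfl⟩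
  · have hne : w ≠ [] := List.ne_nil_of_mem hw
    have hlast : w.getLast hne = false := by
      refine eq_false_of_prefix_drop_subWa h₀ (t := w.length - 1) ?_ (by omega)
      rw [List.getLast_eq_getElem, List.getElem?_eq_getElem]
    have hw' : w = w.dropLast ++ [false] := by rw [← hlast, List.dropLast_concat_getLast]
    have htrue : true ∈ w.dropLast := by
      rw [hw', List.mem_append] at hw
      simpa using hw
    refine ⟨w.dropLast, htrue, by simp; omega, fun u k => ?_⟩
    conv_lhs => rw [hw']
    exact append_false_prefix_drop_subWa_iff (List.ne_nil_of_mem htrue) (by simp; omega)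

theorem exists_desubstitution {u₀ : List Bool} (ht : w[t]? = some true)
    (hocc : w <:+: subWa u₀) :
    ∃ v, v ≠ [] ∧
      ∀ u s, w <+: (subWa u).drop s ↔ s % 2 = (t + 1) % 2 ∧ v <+: u.drop (s / 2) := by
  set r := (t + 1) % 2
  have hw : w ≠ [] := by
    rintro rfl
    simp at ht
  set w₁ := List.replicate r false ++ w
  have hleft : ∀ u k, w <+: (subWa u).drop (2 * k + r) ↔ w₁ <+: (subWa u).drop (2 * k) := by
    intro u k
    rcases Nat.mod_two_eq_zero_or_one (t + 1) with hr | hr <;> simp only [w₁, r, hr]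
    · simp
    · exact (cons_false_prefix_drop_subWa_iff hw).symm
  obtain ⟨s₀, hs₀⟩ := infix_iff_exists_prefix_drop.1 hocc
  have hs₀r := mod_two_eq_of_prefix_drop_subWa ht hs₀
  rw [← Nat.div_add_mod s₀ 2, hs₀r, hleft] at hs₀
  obtain ⟨w₂, hw₂, he, hright⟩ :=
    exists_even_length_prefix_drop_subWa_iff (by simp [w₁, List.mem_of_getElem? ht]) hs₀
  obtain ⟨v, rfl⟩ := exists_subW_eq_of_prefix_drop_subWa he ((hright _ _).1 hs₀)
  refine ⟨v, by rintro rfl; simp [subW] at hw₂, fun u s => ?_⟩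
  rw [← subW_prefix_drop_subWa_iff (k := s / 2), ← hright, ← hleft]
  constructor
  · intro h
    have hs := mod_two_eq_of_prefix_drop_subWa ht h
    exact ⟨hs, by rwa [show 2 * (s / 2) + r = s by omega]⟩
  · rintro ⟨hs, h⟩
    rwa [show 2 * (s / 2) + r = s by omega] at h

theorem infix_subWa_iff_of_forall {v : List Bool} {r : ℕ} (hr : r < 2)
    (h : ∀ u s, w <+: (subWa u).drop s ↔ s % 2 = r ∧ v <+: u.drop (s / 2)) (u : List Bool) :
    w <:+: subWa u ↔ v <:+: u := by
  simp only [infix_iff_exists_prefix_drop, h]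
  constructor
  · rintro ⟨s, -, hs⟩
    exact ⟨s / 2, hs⟩
  · rintro ⟨k, hk⟩
    exact ⟨2 * k + r, by omega, by rwa [show (2 * k + r) / 2 = k by omega]⟩

theorem existsUnique_prefix_drop_subWa_iff_of_forall {v : List Bool} {r : ℕ} (hr : r < 2)
    (h : ∀ u s, w <+: (subWa u).drop s ↔ s % 2 = r ∧ v <+: u.drop (s / 2)) (u : List Bool) :
    (∃! s, w <+: (subWa u).drop s) ↔ ∃! k, v <+: u.drop k := by
  simp only [h]
  constructor
  · rintro ⟨s, ⟨hs, hv⟩, huniq⟩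
    refine ⟨s / 2, hv, fun k hk => ?_⟩
    have := huniq (2 * k + r) ⟨by omega, by rwa [show (2 * k + r) / 2 = k by omega]⟩
    omega
  · rintro ⟨k, hk, huniq⟩
    refine ⟨2 * k + r, ⟨by omega, by rwa [show (2 * k + r) / 2 = k by omega]⟩, ?_⟩
    rintro s ⟨hs, hv⟩
    have := huniq _ hv
    omega

theorem not_true_true_infix_subWa (u : List Bool) : ¬ [true, true] <:+: subWa u := by
  rw [infix_iff_exists_prefix_drop]
  rintro ⟨s, hs⟩
  have h₀ := mod_two_eq_of_prefix_drop_subWa (t := 0) rfl hs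
  have h₁ := mod_two_eq_of_prefix_drop_subWa (t := 1) rfl hs
  omega

theorem not_replicate_four_infix_subWa (h : ¬ [true, true] <:+: u) :
    ¬ List.replicate 4 false <:+: subWa u := by
  rw [infix_iff_exists_prefix_drop]
  rintro ⟨s, hs⟩
  have hlen := hs.length_le
  rw [List.length_drop, length_subWa, List.length_replicate] at hlen
  -- the occurrence covers the two odd positions `2q + 1`, `2q + 3` with `q = s / 2`
  have hodd : ∀ j, s ≤ 2 * j + 1 → 2 * j + 1 < s + 4 → u[j]? = some true := by
    intro j h₁ h₂
    have := List.prefix_iff_getElem?.1 hs (2 * j + 1 - s) (by simp; omega)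
    rw [List.getElem?_drop, show s + (2 * j + 1 - s) = 2 * j + 1 by omega,
      getElem?_subWa_two_mul_add_one, List.getElem_replicate] at this
    simpa using this
  apply h
  rw [infix_iff_exists_prefix_drop]
  refine ⟨s / 2, List.prefix_iff_getElem?.2 fun i hi => ?_⟩
  rw [List.getElem?_drop]
  simp only [List.length_cons, List.length_nil] at hi
  interval_cases i <;> exact hodd _ (by omega) (by omega)

end Alignment

section Envelope

theorem A_succ (k : ℕ) : A (k + 1) = subW (A k) := Function.iterate_succ_apply' subW k [false]

theorem A_ne_nil (k : ℕ) : A k ≠ [] := by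
  induction k with
  | zero => simp [A]
  | succ k ih => rwa [A_succ, Ne, subW_eq_nil_iff]

theorem dropLast_subW {u : List Bool} (hu : u ≠ []) :
    (subW u).dropLast = subW u.dropLast ++ [false] := by
  obtain ⟨u, x, rfl⟩ := (List.eq_nil_or_concat u).resolve_left hu
  cases x <;> simp [sub, subW]

theorem E_succ {k : ℕ} (hk : 1 ≤ k) (i : ℕ) : E (k + 1) i = subWa (E k i) := by
  obtain ⟨k, rfl⟩ := Nat.exists_eq_add_of_le' hk
  simp only [E, subWa, Nat.add_sub_cancel]
  rw [A_succ (k + 1), dropLast_subW (A_ne_nil _)]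
  split_ifs
  · rfl
  · rw [A_succ k, subW_append, List.append_assoc]

theorem true_not_mem_E_one (i : ℕ) : true ∉ E 1 i := by
  unfold E
  split_ifs <;> decide

theorem not_true_true_infix_E {m : ℕ} (hm : 1 ≤ m) (i : ℕ) : ¬ [true, true] <:+: E m i := by
  obtain ⟨M, rfl⟩ := Nat.exists_eq_add_of_le' hm
  rcases M.eq_zero_or_pos with rfl | hM
  · exact fun h => true_not_mem_E_one i (h.subset (by simp))
  · rw [E_succ hM]
    exact not_true_true_infix_subWa _

theorem not_replicate_four_infix_E {m : ℕ} (hm : 1 ≤ m) (i : ℕ) :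
    ¬ List.replicate 4 false <:+: E m i := by
  obtain ⟨M, rfl⟩ := Nat.exists_eq_add_of_le' hm
  rcases M.eq_zero_or_pos with rfl | hM
  · unfold E
    split_ifs <;> decide
  · rw [E_succ hM]
    exact not_replicate_four_infix_subWa (not_true_true_infix_E hM i)

theorem IsEnv.eq {w : List Bool} {m i m' i' : ℕ} (h : IsEnv w m i) (h' : IsEnv w m' i') :
    m = m' ∧ i = i' := by
  obtain ⟨hm, hi, hw, hmin⟩ := h
  obtain ⟨hm', hi', hw', hmin'⟩ := h'
  have h₁ : ¬ EnvLt m i m' i' := fun hlt => hmin' m i hm hi hlt hw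
  have h₂ : ¬ EnvLt m' i' m i := fun hlt => hmin m' i' hm' hi' hlt hw'
  unfold EnvLt at h₁ h₂
  omega

theorem IsEnv.of_subWa {w v : List Bool} {M i : ℕ} (hM : 1 ≤ M)
    (hwv : ∀ u, w <:+: subWa u ↔ v <:+: u) (h : IsEnv w (M + 1) i) : IsEnv v M i := by
  obtain ⟨-, hi, hw, hmin⟩ := h
  rw [E_succ hM, hwv] at hw
  refine ⟨hM, hi, hw, fun m' i' hm' hi' hlt hv => ?_⟩
  refine hmin (m' + 1) i' (by omega) hi' (by unfold EnvLt at hlt ⊢; omega) ?_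
  rwa [E_succ hm', hwv]

theorem isEnv_replicate_one : IsEnv (List.replicate 1 false) 1 1 :=
  ⟨le_rfl, Or.inl rfl, by decide, fun m' i' _ _ hlt => by unfold EnvLt at hlt; omega⟩

theorem isEnv_replicate_two : IsEnv (List.replicate 2 false) 1 2 := by
  refine ⟨le_rfl, Or.inr rfl, by decide, fun m' i' hm' _ hlt => ?_⟩
  obtain ⟨rfl, rfl⟩ : m' = 1 ∧ i' = 1 := by unfold EnvLt at hlt; omega
  decide

theorem isEnv_replicate_three : IsEnv (List.replicate 3 false) 3 1 := by
  refine ⟨by norm_num, Or.inl rfl, by decide, fun m' i' hm' hi' hlt => ?_⟩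
  have hm' : m' = 1 ∨ m' = 2 := by unfold EnvLt at hlt; omega
  rcases hm' with rfl | rfl <;> rcases hi' with rfl | rfl <;> decide

theorem existsUnique_prefix_drop_E_of_isEnv_replicate {n m i : ℕ} (hn : 0 < n)
    (h : IsEnv (List.replicate n false) m i) :
    ∃! s, List.replicate n false <+: (E m i).drop s := by
  have hn4 : n < 4 := by
    by_contra! hn4
    apply not_replicate_four_infix_E h.1 i
    rw [← Nat.add_sub_cancel' hn4, List.replicate_add] at h
    exact (List.prefix_append _ _).isInfix.trans h.2.2.1
  interval_cases n
  · obtain ⟨rfl, rfl⟩ := h.eq isEnv_replicate_one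
    exact existsUnique_prefix_drop_of_forall_lt (s := 0) (by simp) (by decide) (by decide)
  · obtain ⟨rfl, rfl⟩ := h.eq isEnv_replicate_two
    exact existsUnique_prefix_drop_of_forall_lt (s := 0) (by simp) (by decide) (by decide)
  · obtain ⟨rfl, rfl⟩ := h.eq isEnv_replicate_three
    exact existsUnique_prefix_drop_of_forall_lt (s := 2) (by simp) (by decide) (by decide)

theorem existsUnique_prefix_drop_E_of_isEnv {w : List Bool} {m i : ℕ} (hw : w ≠ [])
    (h : IsEnv w m i) : ∃! s, w <+: (E m i).drop s := by
  induction m generalizing w with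
  | zero => exact absurd h.1 (by norm_num)
  | succ M ih =>
    by_cases htrue : true ∈ w
    · obtain ⟨t, ht⟩ := List.mem_iff_getElem?.1 htrue
      have hM : 1 ≤ M := by
        by_contra! hM
        obtain rfl : M = 0 := by omega
        exact true_not_mem_E_one i (h.2.2.1.subset htrue)
      obtain ⟨v, hv, hwv⟩ := exists_desubstitution ht (E_succ hM i ▸ h.2.2.1)
      have hr : (t + 1) % 2 < 2 := Nat.mod_lt _ two_pos
      rw [E_succ hM, existsUnique_prefix_drop_subWa_iff_of_forall hr hwv]
      exact ih hv (h.of_subWa hM (infix_subWa_iff_of_forall hr hwv))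
    · have hrep : w = List.replicate w.length false :=
        List.eq_replicate_of_mem fun b hb => by cases b <;> simp_all
      rw [hrep] at h ⊢
      exact existsUnique_prefix_drop_E_of_isEnv_replicate (List.length_pos_iff.2 hw) h

end Envelope

end PD

theorem doubling_envelope_unique_weak_general (w : List Bool) (hw : w ≠ [])
    (m i : ℕ) (henv : IsEnv w m i) :
    (∃! j : ℕ, OccursIn w (E m i) j) ∧
      (∃! μ : List Bool × List Bool, E m i = μ.1 ++ w ++ μ.2) := by
  have h := existsUnique_prefix_drop_E_of_isEnv hw henv
  exact ⟨existsUnique_occursIn_iff.2 h, existsUnique_append_append_eq h⟩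

/-- Uniqueness of envelope extension, weak version: if `w` is a nonempty factor of
the doubling sequence with `Env(w) = E m i`, then `w` occurs at exactly one
position in `E m i`; in particular there are unique words `μ₁, μ₂` with
`E m i = μ₁ · w · μ₂`. -/
theorem doubling_envelope_unique_weak (w : List Bool) (hw : w ≠ []) (hfac : FactorD w)
    (m i : ℕ) (henv : IsEnv w m i) :
    (∃! j : ℕ, OccursIn w (E m i) j) ∧
      (∃! μ : List Bool × List Bool, E m i = μ.1 ++ w ++ μ.2) :=
  doubling_envelope_unique_weak_general w hw m i henv
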